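/- arXiv:1902.00977 — 2 statements merged into one kernel-verified Lean document; each statement's English description precedes it below -/
import Mathlib

section
/- (Eckart–Young theorem) Let ψ = ∑_{i≥1} λ_i (a_i ⊗ b_i) with orthonormal families (a_i), (b_i), λ_1 ≥ λ_2 ≥ ... > 0, ∑ λ_i² = 1. Then every vector φ ∈ A ⊗ B of Schmidt rank at most D with ‖φ‖ = 1 satisfies |⟨φ, ψ⟩| ≤ sqrt(∑_{i=1}^D λ_i²). -/
/-!
Write `φ = ∑_{j < D} x_j ⊗ y_j` and let `P` be the orthogonal projection onto the span `K` of the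
`x_j`. Since `φ ∈ K ⊗ B`, replacing `ψ` by `χ = ∑ λ_i P a_i ⊗ b_i` does not change `⟨φ, ψ⟩`, so
`|⟨φ, ψ⟩| ≤ ‖χ‖` and `‖χ‖² = ∑ λ_i² t_i` with `t_i = ‖P a_i‖²`. The weights satisfy `0 ≤ t_i ≤ 1`
and, by Bessel's inequality in an orthonormal basis of `K`, `∑ t_i ≤ dim K ≤ D`. Under these
constraints a sum `∑ λ_i² t_i` with decreasing `λ_i²` is largest when `t` is the indicator of the
first `D` indices.
-/

open scoped ComplexInnerProductSpace

/-- The elementary tensor `u ⊗ v`, modeled concretely in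
`EuclideanSpace ℂ (Fin dA × Fin dB) ≅ EuclideanSpace ℂ (Fin dA) ⊗ EuclideanSpace ℂ (Fin dB)`. -/
noncomputable def tensorVec {dA dB : ℕ} (u : EuclideanSpace ℂ (Fin dA))
    (v : EuclideanSpace ℂ (Fin dB)) : EuclideanSpace ℂ (Fin dA × Fin dB) :=
  WithLp.toLp 2 (fun p => u p.1 * v p.2)

open Finset Module

theorem sum_mul_le_sum_filter_lt_of_antitone {N : ℕ} {w : Fin N → ℝ} (hw : Antitone w)
    (hw0 : 0 ≤ w) {t : Fin N → ℝ} (ht0 : 0 ≤ t) (ht1 : t ≤ 1) {D : ℕ} (htD : ∑ i, t i ≤ D) :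
    ∑ i, w i * t i ≤ ∑ i ∈ univ.filter (fun i : Fin N => (i : ℕ) < D), w i := by
  set s : Fin N → ℝ := fun i => if (i : ℕ) < D then 1 else 0
  -- the threshold weight `w D`; each term of `∑ (w i - μ) (t i - s i)` is then nonpositive
  set μ : ℝ := if h : D < N then w ⟨D, h⟩ else 0
  have hμ0 : 0 ≤ μ := by unfold μ; split_ifs; exacts [hw0 _, le_rfl]
  have hμs : μ * ∑ i, s i = μ * D := by
    have hs : ∑ i, s i = (min N D : ℕ) := by simp [s, Fin.card_filter_val_lt]
    unfold μ; split_ifs with h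
    · rw [hs, min_eq_right h.le]
    · simp
  have hterm : ∀ i, (w i - μ) * (t i - s i) ≤ 0 := by
    intro i
    by_cases hi : (i : ℕ) < D
    · have hμw : μ ≤ w i := by
        unfold μ; split_ifs with hDN
        · exact hw (Fin.mk_le_mk.2 hi.le)
        · exact hw0 i
      simp only [s, if_pos hi]
      exact mul_nonpos_of_nonneg_of_nonpos (sub_nonneg.2 hμw) (sub_nonpos.2 (ht1 i))
    · have hDN : D < N := (not_lt.1 hi).trans_lt i.2
      have hwμ : w i ≤ μ := by
        simp only [μ, dif_pos hDN]
        exact hw (Fin.mk_le_mk.2 (not_lt.1 hi))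
      simp only [s, if_neg hi, sub_zero]
      exact mul_nonpos_of_nonpos_of_nonneg (sub_nonpos.2 hwμ) (ht0 i)
  have hfilter : ∑ i ∈ univ.filter (fun i : Fin N => (i : ℕ) < D), w i = ∑ i, w i * s i := by
    simp [sum_filter, s, mul_ite]
  have hsplit : ∑ i, w i * t i - ∑ i, w i * s i
      = ∑ i, (w i - μ) * (t i - s i) + μ * (∑ i, t i - ∑ i, s i) := by
    simp only [mul_sub, sub_mul, sum_sub_distrib, ← mul_sum]
    ring
  rw [hfilter]
  linarith [sum_nonpos fun i (_ : i ∈ univ) => hterm i, mul_le_mul_of_nonneg_left htD hμ0]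

theorem Orthonormal.sum_norm_sq_starProjection_le_finrank {𝕜 E ι : Type*} [RCLike 𝕜]
    [NormedAddCommGroup E] [InnerProductSpace 𝕜 E] [Fintype ι] {a : ι → E}
    (ha : Orthonormal 𝕜 a) (K : Submodule 𝕜 E) [FiniteDimensional 𝕜 K] :
    ∑ i, ‖K.starProjection (a i)‖ ^ 2 ≤ finrank 𝕜 K := by
  let e := stdOrthonormalBasis 𝕜 K
  have hparseval : ∀ v, ‖K.starProjection v‖ ^ 2 = ∑ k, ‖inner 𝕜 (e k : E) v‖ ^ 2 := fun v => by
    rw [Submodule.starProjection_apply, ← Submodule.coe_norm,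
      ← e.sum_sq_norm_inner_right (K.orthogonalProjectionOnto v)]
    simp only [Submodule.inner_orthogonalProjectionOnto_eq_of_mem_left]
  calc ∑ i, ‖K.starProjection (a i)‖ ^ 2 = ∑ k, ∑ i, ‖inner 𝕜 (a i) (e k : E)‖ ^ 2 := by
        simp only [hparseval, norm_inner_symm (e _ : E)]
        exact sum_comm
    _ ≤ ∑ k, ‖(e k : E)‖ ^ 2 := sum_le_sum fun k _ => ha.sum_inner_products_le _
    _ = finrank 𝕜 K := by
        simp only [← Submodule.coe_norm, e.orthonormal.1 _, one_pow, sum_const, card_univ,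
          Fintype.card_fin, nsmul_eq_mul, mul_one]

theorem inner_tensorVec {dA dB : ℕ} (u u' : EuclideanSpace ℂ (Fin dA))
    (v v' : EuclideanSpace ℂ (Fin dB)) :
    ⟪tensorVec u v, tensorVec u' v'⟫ = ⟪u, u'⟫ * ⟪v, v'⟫ := by
  simp only [PiLp.inner_apply, RCLike.inner_apply, tensorVec, sum_mul_sum, map_mul,
    Fintype.sum_prod_type]
  exact sum_congr rfl fun _ _ => sum_congr rfl fun _ _ => by ring

theorem inner_sum_tensorVec_starProjection {dA dB : ℕ} {ι : Type*} [Fintype ι]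
    {x : ι → EuclideanSpace ℂ (Fin dA)} (y : ι → EuclideanSpace ℂ (Fin dB))
    {K : Submodule ℂ (EuclideanSpace ℂ (Fin dA))} [K.HasOrthogonalProjection] (hx : ∀ j, x j ∈ K)
    (u : EuclideanSpace ℂ (Fin dA)) (v : EuclideanSpace ℂ (Fin dB)) :
    ⟪∑ j, tensorVec (x j) (y j), tensorVec (K.starProjection u) v⟫ =
      ⟪∑ j, tensorVec (x j) (y j), tensorVec u v⟫ := by
  simp only [sum_inner, inner_tensorVec, ← K.inner_starProjection_left_eq_right,
    (K.starProjection_eq_self_iff).2 (hx _)]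

theorem norm_sq_sum_smul_tensorVec {dA dB : ℕ} {ι : Type*} [Fintype ι]
    {b : ι → EuclideanSpace ℂ (Fin dB)} (hb : Orthonormal ℂ b) (c : ι → ℂ)
    (u : ι → EuclideanSpace ℂ (Fin dA)) :
    ‖∑ i, c i • tensorVec (u i) (b i)‖ ^ 2 = ∑ i, ‖c i‖ ^ 2 * ‖u i‖ ^ 2 := by
  classical
  rw [@norm_sq_eq_re_inner ℂ]
  simp only [sum_inner, inner_sum, inner_smul_left, inner_smul_right, inner_tensorVec,
    orthonormal_iff_ite.1 hb, mul_ite, mul_one, mul_zero, sum_ite_eq', mem_univ,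
    if_true, map_sum]
  refine sum_congr rfl fun i _ => ?_
  rw [inner_self_eq_norm_sq_to_K, ← mul_assoc, RCLike.mul_conj]
  norm_cast

theorem eckart_young_general {dA dB N : ℕ}
    (a : Fin N → EuclideanSpace ℂ (Fin dA)) (ha : Orthonormal ℂ a)
    (b : Fin N → EuclideanSpace ℂ (Fin dB)) (hb : Orthonormal ℂ b)
    (lam : Fin N → ℝ) (hmono : Antitone lam) (hpos : ∀ i, 0 < lam i)
    (ψ : EuclideanSpace ℂ (Fin dA × Fin dB))
    (hψ : ψ = ∑ i, (lam i : ℂ) • tensorVec (a i) (b i))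
    (D : ℕ) (φ : EuclideanSpace ℂ (Fin dA × Fin dB)) (hφn : ‖φ‖ = 1)
    (hrank : ∃ (x : Fin D → EuclideanSpace ℂ (Fin dA)) (y : Fin D → EuclideanSpace ℂ (Fin dB)),
      φ = ∑ j, tensorVec (x j) (y j)) :
    ‖⟪φ, ψ⟫‖ ≤ Real.sqrt (∑ i ∈ Finset.univ.filter (fun i : Fin N => (i : ℕ) < D),
      (lam i) ^ 2) := by
  obtain ⟨x, y, hφ⟩ := hrank
  let K := Submodule.span ℂ (Set.range x)
  let χ := ∑ i, (lam i : ℂ) • tensorVec (K.starProjection (a i)) (b i)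
  have hψχ : ⟪φ, ψ⟫ = ⟪φ, χ⟫ := by
    simp only [hφ, hψ, χ, inner_sum, inner_smul_right,
      inner_sum_tensorVec_starProjection (K := K) y
        (fun j => Submodule.subset_span (Set.mem_range_self j))]
  have hχ : ‖χ‖ ^ 2 = ∑ i, lam i ^ 2 * ‖K.starProjection (a i)‖ ^ 2 :=
    (norm_sq_sum_smul_tensorVec hb _ _).trans (by simp)
  have hweights : ∑ i, lam i ^ 2 * ‖K.starProjection (a i)‖ ^ 2 ≤
      ∑ i ∈ univ.filter (fun i : Fin N => (i : ℕ) < D), lam i ^ 2 := by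
    refine sum_mul_le_sum_filter_lt_of_antitone
      (fun i j hij => pow_le_pow_left₀ (hpos j).le (hmono hij) 2) (fun i => sq_nonneg _)
      (fun i => sq_nonneg _) (fun i => ?_) ?_
    · simpa [ha.1 i] using pow_le_pow_left₀ (norm_nonneg _) (K.norm_starProjection_apply_le (a i)) 2
    · refine (ha.sum_norm_sq_starProjection_le_finrank K).trans ?_
      exact_mod_cast (finrank_range_le_card x).trans (Fintype.card_fin D).le
  calc ‖⟪φ, ψ⟫‖ ≤ ‖φ‖ * ‖χ‖ := hψχ ▸ norm_inner_le_norm φ χ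
    _ = Real.sqrt (‖χ‖ ^ 2) := by rw [hφn, one_mul, Real.sqrt_sq (norm_nonneg χ)]
    _ ≤ _ := Real.sqrt_le_sqrt (hχ ▸ hweights)

/-- Eckart–Young theorem: if `ψ = ∑ λᵢ aᵢ ⊗ bᵢ` is a Schmidt decomposition with
`λ 0 ≥ λ 1 ≥ ⋯ > 0` and `∑ λᵢ² = 1`, then every unit vector `φ` of Schmidt rank at most `D`
satisfies `|⟨φ, ψ⟩| ≤ sqrt (∑_{i < D} λᵢ²)`. -/
theorem eckart_young {dA dB N : ℕ}
    (a : Fin N → EuclideanSpace ℂ (Fin dA)) (ha : Orthonormal ℂ a)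
    (b : Fin N → EuclideanSpace ℂ (Fin dB)) (hb : Orthonormal ℂ b)
    (lam : Fin N → ℝ) (hmono : Antitone lam) (hpos : ∀ i, 0 < lam i)
    (hnorm : ∑ i, (lam i) ^ 2 = 1)
    (ψ : EuclideanSpace ℂ (Fin dA × Fin dB))
    (hψ : ψ = ∑ i, (lam i : ℂ) • tensorVec (a i) (b i))
    (D : ℕ) (φ : EuclideanSpace ℂ (Fin dA × Fin dB)) (hφn : ‖φ‖ = 1)
    (hrank : ∃ (x : Fin D → EuclideanSpace ℂ (Fin dA)) (y : Fin D → EuclideanSpace ℂ (Fin dB)),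
      φ = ∑ j, tensorVec (x j) (y j)) :
    ‖⟪φ, ψ⟫‖ ≤ Real.sqrt (∑ i ∈ Finset.univ.filter (fun i : Fin N => (i : ℕ) < D),
      (lam i) ^ 2) :=
  eckart_young_general a ha b hb lam hmono hpos ψ hψ D φ hφn hrank
end

section
/- Let U_1, ..., U_t and V_1, ..., V_t be unitaries on a Hilbert space, P an orthogonal projection, with U_k P = V_k P for all k. Let ψ₀ be a unit vector such that ‖(1 − P) U_k U_{k−1} ⋯ U_1 ψ₀‖ ≤ ε for all 0 ≤ k < t. Then ‖U_t ⋯ U_1 ψ₀ − V_t ⋯ V_1 ψ₀‖ ≤ 2tε. -/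
open scoped ComplexInnerProductSpace

variable {H : Type*} [NormedAddCommGroup H] [InnerProductSpace ℂ H]

/-- `iterApply U k ψ = U_k (U_{k-1} ⋯ (U_1 ψ))`, the state after `k` circuit layers
(the empty product is the identity). -/
def iterApply (U : ℕ → (H ≃ₗᵢ[ℂ] H)) : ℕ → H → H
  | 0, ψ => ψ
  | k + 1, ψ => U (k + 1) (iterApply U k ψ)

/-- Iterated hybrid argument: if `U_k P = V_k P` for all `k` and the evolved states
`U_k ⋯ U_1 ψ₀` are `ε`-close to the range of the orthogonal projection `P` at every
intermediate time, then `‖U_t ⋯ U_1 ψ₀ − V_t ⋯ V_1 ψ₀‖ ≤ 2 t ε`. -/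
theorem iterated_hybrid_bound (P : H →L[ℂ] H) (hidem : P ∘L P = P)
    (hsym : ∀ x y : H, ⟪P x, y⟫ = ⟪x, P y⟫)
    (t : ℕ) (U V : ℕ → (H ≃ₗᵢ[ℂ] H))
    (hUV : ∀ k, 1 ≤ k → k ≤ t → ∀ x : H, U k (P x) = V k (P x))
    (ψ₀ : H) (hψ₀ : ‖ψ₀‖ = 1) (ε : ℝ) (hε : 0 ≤ ε)
    (hclose : ∀ k < t, ‖iterApply U k ψ₀ - P (iterApply U k ψ₀)‖ ≤ ε) :
    ‖iterApply U t ψ₀ - iterApply V t ψ₀‖ ≤ 2 * t * ε := by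
  have key : ∀ k, k ≤ t → ‖iterApply U k ψ₀ - iterApply V k ψ₀‖ ≤ 2 * k * ε := by
    intro k
    induction k with
    | zero => intro _; simp [iterApply]
    | succ n ih =>
      intro hk
      have hn : n ≤ t := Nat.le_of_succ_le hk
      have ih' := ih hn
      set ψ := iterApply U n ψ₀ with hψ
      have hmid : ‖U (n+1) ψ - V (n+1) ψ‖ ≤ 2 * ε := by
        have hc : ‖ψ - P ψ‖ ≤ ε := hclose n (Nat.lt_of_succ_le hk)
        have h1 : ‖U (n+1) ψ - V (n+1) ψ‖ ≤
            ‖U (n+1) ψ - U (n+1) (P ψ)‖ + ‖U (n+1) (P ψ) - V (n+1) ψ‖ :=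
          norm_sub_le_norm_sub_add_norm_sub _ _ _
        have e1 : ‖U (n+1) ψ - U (n+1) (P ψ)‖ = ‖ψ - P ψ‖ := by
          rw [← LinearIsometryEquiv.map_sub, LinearIsometryEquiv.norm_map]
        have e2 : ‖U (n+1) (P ψ) - V (n+1) ψ‖ = ‖ψ - P ψ‖ := by
          rw [hUV (n+1) (Nat.le_add_left 1 n) hk ψ, ← LinearIsometryEquiv.map_sub,
            LinearIsometryEquiv.norm_map, norm_sub_rev]
        rw [e1, e2] at h1
        linarith
      have hstep : ‖iterApply U (n+1) ψ₀ - iterApply V (n+1) ψ₀‖ ≤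
          ‖U (n+1) ψ - V (n+1) ψ‖ + ‖ψ - iterApply V n ψ₀‖ := by
        have heq : iterApply U (n+1) ψ₀ - iterApply V (n+1) ψ₀ =
            (U (n+1) ψ - V (n+1) ψ) +
            (V (n+1) ψ - V (n+1) (iterApply V n ψ₀)) := by
          show U (n+1) (iterApply U n ψ₀) - V (n+1) (iterApply V n ψ₀) = _
          rw [← hψ]; abel
        rw [heq]
        refine (norm_add_le _ _).trans ?_
        gcongr
        rw [← LinearIsometryEquiv.map_sub, LinearIsometryEquiv.norm_map]
      have : ‖iterApply U (n+1) ψ₀ - iterApply V (n+1) ψ₀‖ ≤ 2 * ε + 2 * n * ε := by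
        linarith
      refine this.trans ?_
      push_cast
      ring_nf
      linarith [mul_le_mul_of_nonneg_left hε (by positivity : (0:ℝ) ≤ 2)]
  exact key t le_rfl
end
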